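/- arXiv:1512.06142 — 4 statements merged into one kernel-verified Lean document; each statement's English description precedes it below -/
import Mathlib

section
/- Let A ∈ R^{m×n} with at least two distinct columns, and let Z ⊆ Δ_{n−1} be nonempty. Define Φ(A,Z) = inf over z ∈ Z and x ∈ Δ_{n−1} with A(x−z) ≠ 0 of Φ(A,x,z). Let F be the smallest face of conv(A) containing {Az : z ∈ Z}. Then Φ(A,Z) ≥ min over nonempty faces G of F with G ≠ conv(A) of dist(G, conv(A\G)). -/
open scoped RealInnerProductSpace BigOperators

noncomputable def Amul {m n : ℕ} (A : Matrix (Fin m) (Fin n) ℝ) (x : Fin n → ℝ) :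
    EuclideanSpace ℝ (Fin m) := WithLp.toLp 2 (fun i => ∑ j, A i j * x j)

noncomputable def col {m n : ℕ} (A : Matrix (Fin m) (Fin n) ℝ) (j : Fin n) :
    EuclideanSpace ℝ (Fin m) := WithLp.toLp 2 (fun i => A i j)

def colSet {m n : ℕ} (A : Matrix (Fin m) (Fin n) ℝ) : Set (EuclideanSpace ℝ (Fin m)) :=
  {a | ∃ j, a = col A j}

noncomputable def maxGap {m n : ℕ} (A : Matrix (Fin m) (Fin n) ℝ) (x : Fin n → ℝ)
    (p : EuclideanSpace ℝ (Fin m)) : ℝ :=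
  sSup {t | ∃ i j : Fin n, 0 < x i ∧ t = ⟪p, col A i - col A j⟫}

noncomputable def phi {m n : ℕ} (A : Matrix (Fin m) (Fin n) ℝ) (x z : Fin n → ℝ) : ℝ :=
  sInf {r | ∃ p : EuclideanSpace ℝ (Fin m),
    ⟪p, (‖Amul A x - Amul A z‖)⁻¹ • (Amul A x - Amul A z)⟫ = 1 ∧ r = maxGap A x p}

/-- Euclidean distance between two sets. -/
noncomputable def setDist {m : ℕ} (C D : Set (EuclideanSpace ℝ (Fin m))) : ℝ :=
  sInf {r | ∃ c ∈ C, ∃ d ∈ D, r = dist c d}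

/-- The localized facial distance `Φ(A,Z) = inf_{z ∈ Z, x ∈ Δ, A(x-z) ≠ 0} Φ(A,x,z)`. -/
noncomputable def phiLoc {m n : ℕ} (A : Matrix (Fin m) (Fin n) ℝ)
    (Z : Set (Fin n → ℝ)) : ℝ :=
  sInf {r | ∃ z ∈ Z, ∃ x ∈ stdSimplex ℝ (Fin n),
    Amul A x - Amul A z ≠ 0 ∧ r = phi A x z}


section Cone

variable {V : Type*} [NormedAddCommGroup V] [NormedSpace ℝ V]

private lemma cone_carath {n : ℕ} (v : Fin n → V) :
    ∀ (N : ℕ) (c : Fin n → ℝ), (Finset.univ.filter fun j => c j ≠ 0).card ≤ N →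
      (∀ j, 0 ≤ c j) →
      ∃ c' : Fin n → ℝ, (∀ j, 0 ≤ c' j) ∧ (∑ j, c' j • v j = ∑ j, c j • v j) ∧
        LinearIndependent ℝ (fun j : {j // c' j ≠ 0} => v j) := by
  classical
  intro N
  induction N with
  | zero =>
    intro c hcard hc
    refine ⟨c, hc, rfl, ?_⟩
    have hempty : (Finset.univ.filter fun j => c j ≠ 0) = ∅ :=
      Finset.card_eq_zero.mp (Nat.le_zero.mp hcard)
    have : IsEmpty {j // c j ≠ 0} := by
      constructor
      rintro ⟨j, hj⟩
      have : j ∈ (Finset.univ.filter fun j => c j ≠ 0) := by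
        simp [hj]
      simp [hempty] at this
    exact linearIndependent_empty_type
  | succ N ih =>
    intro c hcard hc
    by_cases hli : LinearIndependent ℝ (fun j : {j // c j ≠ 0} => v j)
    · exact ⟨c, hc, rfl, hli⟩
    obtain ⟨g, hgsum, i₀, hgi₀⟩ := Fintype.not_linearIndependent_iff.mp hli
    -- wlog some positive coefficient
    obtain ⟨g', hg'sum, i₁, hgi₁⟩ :
        ∃ g' : {j // c j ≠ 0} → ℝ, (∑ i, g' i • v ↑i = 0) ∧ ∃ i, 0 < g' i := by
      rcases lt_or_ge 0 (g i₀) with h | h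
      · exact ⟨g, hgsum, i₀, h⟩
      · refine ⟨-g, by simp [hgsum], i₀, ?_⟩
        have : g i₀ < 0 := lt_of_le_of_ne h hgi₀
        simpa using this
    set d : Fin n → ℝ := fun j => if h : c j ≠ 0 then g' ⟨j, h⟩ else 0 with hd
    have hdsum : ∑ j, d j • v j = 0 := by
      rw [← Finset.sum_filter_of_ne (p := fun j => c j ≠ 0)
        (by intro x _ hx; by_contra hcx; simp [hd, hcx] at hx)]
      have hconv : ∑ i : {j // c j ≠ 0}, g' i • v ↑i
          = ∑ j ∈ Finset.univ.filter (fun j => c j ≠ 0), d j • v j := by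
        rw [← Finset.sum_subtype_eq_sum_filter (fun j => d j • v j)
          (p := fun j => c j ≠ 0)]
        rw [Finset.subtype_univ]
        apply Finset.sum_congr rfl
        rintro ⟨j, hj⟩ _
        simp [hd, hj]
      rw [← hconv, hg'sum]
    have hP : (Finset.univ.filter fun j => 0 < d j).Nonempty := by
      refine ⟨↑i₁, ?_⟩
      simp only [Finset.mem_filter, Finset.mem_univ, true_and, hd]
      rw [dif_pos i₁.2]
      · simpa using hgi₁
    obtain ⟨j₀, hj₀P, hmin⟩ := Finset.exists_min_image _ (fun j => c j / d j) hP
    have hdj₀ : 0 < d j₀ := by simpa using (Finset.mem_filter.mp hj₀P).2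
    set t : ℝ := c j₀ / d j₀ with htdef
    have ht0 : 0 ≤ t := div_nonneg (hc j₀) hdj₀.le
    set c' : Fin n → ℝ := fun j => c j - t * d j with hc'
    have hc'0 : ∀ j, 0 ≤ c' j := by
      intro j
      rcases lt_or_ge 0 (d j) with h | h
      · have : t ≤ c j / d j := hmin j (by simp [h])
        have := (le_div_iff₀ h).mp this
        simp [hc', sub_nonneg, this]
      · have : t * d j ≤ 0 := mul_nonpos_of_nonneg_of_nonpos ht0 h
        simp only [hc']
        linarith [hc j]
    have hsum' : ∑ j, c' j • v j = ∑ j, c j • v j := by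
      simp only [hc', sub_smul, Finset.sum_sub_distrib, mul_smul]
      rw [← Finset.smul_sum, hdsum]
      simp
    have hsupp : ∀ j, c j = 0 → c' j = 0 := by
      intro j hj
      have : d j = 0 := by simp [hd, hj]
      simp [hc', hj, this]
    have hcj₀ : c j₀ ≠ 0 := by
      by_contra h
      rw [hd] at hdj₀
      simp only [h] at hdj₀
      rw [dif_neg (by simp)] at hdj₀
      exact lt_irrefl _ hdj₀
    have hc'j₀ : c' j₀ = 0 := by
      simp [hc', htdef]
      field_simp
      ring
    have hsub : (Finset.univ.filter fun j => c' j ≠ 0) ⊂ (Finset.univ.filter fun j => c j ≠ 0) := by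
      constructor
      · intro j hj
        simp only [Finset.mem_filter, Finset.mem_univ, true_and] at hj ⊢
        intro h; exact hj (hsupp j h)
      · intro h
        have := h (Finset.mem_filter.mpr ⟨Finset.mem_univ _, hcj₀⟩)
        simp only [Finset.mem_filter, Finset.mem_univ, true_and] at this
        exact this hc'j₀
    have hcard' : (Finset.univ.filter fun j => c' j ≠ 0).card ≤ N := by
      have := Finset.card_lt_card hsub
      omega
    obtain ⟨c'', h1, h2, h3⟩ := ih c' hcard' hc'0
    exact ⟨c'', h1, h2.trans hsum', h3⟩

/-- The finitely generated convex cone on generators `v`. -/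
private def coneOf {n : ℕ} (v : Fin n → V) : Set V :=
  {y : V | ∃ c : Fin n → ℝ, (∀ j, 0 ≤ c j) ∧ y = ∑ j, c j • v j}

private lemma coneOf_convex {n : ℕ} (v : Fin n → V) : Convex ℝ (coneOf v) := by
  rintro y₁ ⟨c₁, hc₁, rfl⟩ y₂ ⟨c₂, hc₂, rfl⟩ a b ha hb hab
  refine ⟨fun j => a * c₁ j + b * c₂ j,
    fun j => add_nonneg (mul_nonneg ha (hc₁ j)) (mul_nonneg hb (hc₂ j)), ?_⟩
  simp only [add_smul, Finset.sum_add_distrib, mul_smul]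
  rw [← Finset.smul_sum, ← Finset.smul_sum]

private lemma coneOf_zero_mem {n : ℕ} (v : Fin n → V) : (0 : V) ∈ coneOf v :=
  ⟨0, fun j => le_refl 0, by simp⟩

private lemma coneOf_smul_mem {n : ℕ} (v : Fin n → V) {y : V} (hy : y ∈ coneOf v)
    {t : ℝ} (ht : 0 ≤ t) : t • y ∈ coneOf v := by
  obtain ⟨c, hc, rfl⟩ := hy
  refine ⟨fun j => t * c j, fun j => mul_nonneg ht (hc j), ?_⟩
  rw [Finset.smul_sum]
  simp [mul_smul]

private lemma coneOf_isClosed {n : ℕ} [FiniteDimensional ℝ V] (v : Fin n → V) :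
    IsClosed (coneOf v) := by
  classical
  -- union over independent index sets
  have hrep : coneOf v = ⋃ (S : {S : Finset (Fin n) //
      LinearIndependent ℝ (fun j : {j // j ∈ S} => v ↑j)}),
      {y : V | ∃ c : Fin n → ℝ, (∀ j, 0 ≤ c j) ∧ (∀ j, j ∉ S.1 → c j = 0) ∧
        y = ∑ j, c j • v j} := by
    ext y
    constructor
    · rintro ⟨c, hc, rfl⟩
      obtain ⟨c', h1, h2, h3⟩ := cone_carath v _ c le_rfl hc
      set S : Finset (Fin n) := Finset.univ.filter fun j => c' j ≠ 0 with hS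
      have hliS : LinearIndependent ℝ (fun j : {j // j ∈ S} => v ↑j) := by
        have hmem : ∀ j : {j // j ∈ S}, c' j.1 ≠ 0 := by
          rintro ⟨a, ha⟩
          simpa [hS] using ha
        refine h3.comp (fun j => ⟨j.1, hmem j⟩) ?_
        intro a b h
        have h2 : ((⟨a.1, hmem a⟩ : {j // c' j ≠ 0}) : Fin n)
            = ((⟨b.1, hmem b⟩ : {j // c' j ≠ 0}) : Fin n) := congrArg Subtype.val h
        exact Subtype.ext h2
      refine Set.mem_iUnion.mpr ⟨⟨S, hliS⟩, c', h1, ?_, h2.symm⟩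
      intro j hj
      by_contra h
      exact hj (by simp [hS, h])
    · rintro ⟨_, ⟨S, rfl⟩, c, hc, _, rfl⟩
      exact ⟨c, hc, rfl⟩
  rw [hrep]
  apply isClosed_iUnion_of_finite
  rintro ⟨S, hS⟩
  -- the restricted cone is the image of the nonneg orthant under a closed embedding
  let Φ : ({j // j ∈ S} → ℝ) →ₗ[ℝ] V :=
    { toFun := fun c => ∑ j : {j // j ∈ S}, c j • v ↑j
      map_add' := by
        intro a b
        simp only [Pi.add_apply, add_smul]
        exact Finset.sum_add_distrib
      map_smul' := by
        intro r a
        simp [Finset.smul_sum, mul_smul] }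
  have hΦinj : Function.Injective Φ := by
    intro a b hab
    have : Φ (a - b) = 0 := by
      rw [map_sub, hab, sub_self]
    have hz := Fintype.linearIndependent_iff.mp hS (a - b) (by simpa [Φ] using this)
    funext i
    have := hz i
    simpa [sub_eq_zero] using this
  have hemb : IsClosedMap Φ := (Φ.isClosedEmbedding_of_injective (LinearMap.ker_eq_bot.mpr hΦinj)).isClosedMap
  have himage : {y : V | ∃ c : Fin n → ℝ, (∀ j, 0 ≤ c j) ∧ (∀ j, j ∉ S → c j = 0) ∧
      y = ∑ j, c j • v j} = Φ '' {c | ∀ i, 0 ≤ c i} := by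
    ext y
    constructor
    · rintro ⟨c, hc, hsupp, rfl⟩
      refine ⟨fun i => c ↑i, fun i => hc ↑i, ?_⟩
      simp only [Φ, LinearMap.coe_mk, AddHom.coe_mk]
      rw [Finset.sum_coe_sort S (fun j => c j • v j)]
      exact Finset.sum_subset (Finset.subset_univ S)
        (by intro j _ hj; show c j • v j = 0; rw [hsupp j hj, zero_smul])
    · rintro ⟨c₀, hc₀, rfl⟩
      refine ⟨fun j => if h : j ∈ S then c₀ ⟨j, h⟩ else 0, ?_, ?_, ?_⟩
      · intro j
        by_cases h : j ∈ S
        · simp [h, hc₀ ⟨j, h⟩]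
        · simp [h]
      · intro j hj
        simp [hj]
      · simp only [Φ, LinearMap.coe_mk, AddHom.coe_mk]
        rw [← Finset.sum_subset (Finset.subset_univ S)
          (f := fun j => (if h : j ∈ S then c₀ ⟨j, h⟩ else 0) • v j)
          (by intro j _ hj; simp [hj])]
        rw [← Finset.sum_coe_sort S (fun j => (if h : j ∈ S then c₀ ⟨j, h⟩ else 0) • v j)]
        apply Finset.sum_congr rfl
        rintro ⟨j, hj⟩ _
        simp [hj]
  rw [himage]
  apply hemb
  have : {c : {j // j ∈ S} → ℝ | ∀ i, 0 ≤ c i} = ⋂ i, {c | 0 ≤ c i} := by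
    ext c; simp
  rw [this]
  exact isClosed_iInter fun i => isClosed_le continuous_const (continuous_apply i)

private lemma coneOf_separation {n : ℕ} [FiniteDimensional ℝ V] (v : Fin n → V) {b : V}
    (hb : b ∉ coneOf v) :
    ∃ f : V →L[ℝ] ℝ, (∀ y ∈ coneOf v, f y ≤ 0) ∧ 0 < f b := by
  obtain ⟨f, u, hfK, hfb⟩ :=
    geometric_hahn_banach_closed_point (coneOf_convex v) (coneOf_isClosed v) hb
  have hu0 : 0 < u := by simpa using hfK 0 (coneOf_zero_mem v)
  refine ⟨f, ?_, ?_⟩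
  · intro y hy
    by_contra h
    push_neg at h
    have hmem := coneOf_smul_mem v hy (le_of_lt (div_pos hu0 h))
    have := hfK _ hmem
    rw [map_smul] at this
    simp only [smul_eq_mul] at this
    rw [div_mul_cancel₀ _ (ne_of_gt h)] at this
    exact lt_irrefl _ this
  · exact hu0.trans hfb

end Cone

section Rep

variable {V : Type*} [NormedAddCommGroup V] [NormedSpace ℝ V]

private lemma sum_mem_convexHull {n : ℕ} (pt : Fin n → V) (t : Finset (Fin n))
    (β : Fin n → ℝ) (h0 : ∀ j, 0 ≤ β j) (h1 : ∑ j ∈ t, β j = 1)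
    {s : Set V} (hs : ∀ j ∈ t, β j ≠ 0 → pt j ∈ s) :
    ∑ j ∈ t, β j • pt j ∈ convexHull ℝ s := by
  classical
  set t' := t.filter (fun j => β j ≠ 0) with ht'
  have hsum : ∑ j ∈ t', β j • pt j = ∑ j ∈ t, β j • pt j := by
    apply Finset.sum_filter_of_ne
    intro j _ hj
    intro h
    exact hj (by rw [h, zero_smul])
  have hβsum : ∑ j ∈ t', β j = 1 := by
    rw [ht', Finset.sum_filter_of_ne (by intro j _ h h'; exact h (by rw [h']))]
    exact h1
  rw [← hsum]
  have hcm : t'.centerMass β pt = ∑ j ∈ t', β j • pt j :=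
    Finset.centerMass_eq_of_sum_1 _ _ hβsum
  rw [← hcm]
  apply Finset.centerMass_mem_convexHull
  · intro i _; exact h0 i
  · rw [hβsum]; norm_num
  · intro i hi
    rw [ht', Finset.mem_filter] at hi
    exact hs i hi.1 hi.2

private lemma rep_index {n : ℕ} [DecidableEq V] (pt : Fin n → V) (t : Finset (Fin n)) {y : V}
    (hy : y ∈ convexHull ℝ ↑(t.image pt)) :
    ∃ β : Fin n → ℝ, (∀ j, 0 ≤ β j) ∧ (∀ j, j ∉ t → β j = 0) ∧ (∑ j, β j = 1) ∧
      ∑ j, β j • pt j = y := by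
  classical
  rw [Finset.convexHull_eq] at hy
  obtain ⟨w, hw0, hw1, hwy⟩ := hy
  have hcm : (t.image pt).centerMass w id = ∑ p ∈ t.image pt, w p • p := by
    rw [Finset.centerMass_eq_of_sum_1 _ _ hw1]
    rfl
  rw [hcm] at hwy
  set s := t.image pt with hs
  have hpick : ∀ p : {p // p ∈ s}, ∃ a, a ∈ t ∧ pt a = ↑p := by
    rintro ⟨p, hp⟩
    simpa using Finset.mem_image.mp hp
  set pick : {p // p ∈ s} → Fin n := fun p => (hpick p).choose with hpickdef
  have hpickt : ∀ p, pick p ∈ t := fun p => (hpick p).choose_spec.1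
  have hpickpt : ∀ p, pt (pick p) = ↑p := fun p => (hpick p).choose_spec.2
  refine ⟨fun j => ∑ p ∈ s.attach, if pick p = j then w ↑p else 0, ?_, ?_, ?_, ?_⟩
  · intro j
    apply Finset.sum_nonneg
    intro p _
    by_cases h : pick p = j
    · simp only [h, if_true]
      exact hw0 _ p.2
    · simp [h]
  · intro j hj
    apply Finset.sum_eq_zero
    intro p _
    have : pick p ≠ j := fun h => hj (h ▸ hpickt p)
    simp [this]
  · rw [Finset.sum_comm]
    have : ∀ p ∈ s.attach, (∑ j : Fin n, if pick p = j then w ↑p else 0) = w ↑p := by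
      intro p _
      rw [Finset.sum_ite_eq]
      simp
    rw [Finset.sum_congr rfl this, ← hw1]
    exact Finset.sum_attach s w
  · have hdist : ∀ j : Fin n, (∑ p ∈ s.attach, if pick p = j then w ↑p else 0) • pt j
        = ∑ p ∈ s.attach, (if pick p = j then w ↑p else 0) • pt j := fun j =>
      Finset.sum_smul
    rw [Finset.sum_congr rfl (fun j _ => hdist j), Finset.sum_comm]
    have h2 : ∀ p ∈ s.attach,
        (∑ j : Fin n, (if pick p = j then w ↑p else 0) • pt j) = w ↑p • (↑p : V) := by
      intro p _
      have hite : ∀ j : Fin n, (if pick p = j then w ↑p else 0) • pt j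
          = if pick p = j then w ↑p • pt j else 0 := by
        intro j; split <;> simp
      rw [Finset.sum_congr rfl (fun j _ => hite j), Finset.sum_ite_eq]
      simp [hpickpt p]
    rw [Finset.sum_congr rfl h2, ← hwy]
    exact Finset.sum_attach s (fun p => w p • p)

end Rep

section Face

variable {V : Type*} [NormedAddCommGroup V] [NormedSpace ℝ V]

private lemma face_absorb {D : Set V} (l : V →L[ℝ] ℝ) {n : ℕ} (t : Finset (Fin n))
    (β : Fin n → ℝ) (h0 : ∀ i, 0 ≤ β i) (h1 : ∑ i ∈ t, β i = 1)
    (pts : Fin n → V) (hpts : ∀ i ∈ t, pts i ∈ D)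
    (hy : ∑ i ∈ t, β i • pts i ∈ {x ∈ D | ∀ y ∈ D, l y ≤ l x}) :
    ∀ i ∈ t, β i ≠ 0 → pts i ∈ {x ∈ D | ∀ y ∈ D, l y ≤ l x} := by
  classical
  set y := ∑ i ∈ t, β i • pts i with hydef
  have hly : l y = ∑ i ∈ t, β i * l (pts i) := by
    rw [hydef, map_sum]
    apply Finset.sum_congr rfl
    intro i _
    rw [map_smul]
    rfl
  have hterm : ∀ i ∈ t, l (pts i) ≤ l y := fun i hi => hy.2 _ (hpts i hi)
  have hzero : ∑ i ∈ t, β i * (l y - l (pts i)) = 0 := by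
    have : ∑ i ∈ t, β i * (l y - l (pts i))
        = (∑ i ∈ t, β i) * l y - ∑ i ∈ t, β i * l (pts i) := by
      rw [Finset.sum_mul, ← Finset.sum_sub_distrib]
      apply Finset.sum_congr rfl
      intro i _; ring
    rw [this, h1, one_mul, ← hly, sub_self]
  have heach := (Finset.sum_eq_zero_iff_of_nonneg (by
    intro i hi
    exact mul_nonneg (h0 i) (sub_nonneg.mpr (hterm i hi)))).mp hzero
  intro i hi hβ
  have : l y - l (pts i) = 0 := by
    have := heach i hi
    rcases mul_eq_zero.mp this with h | h
    · exact absurd h hβ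
    · exact h
  have hli : l (pts i) = l y := by linarith
  exact ⟨hpts i hi, fun y' hy' => (hy.2 y' hy').trans (le_of_eq hli.symm)⟩

end Face

section Key

private lemma amul_eq {m n : ℕ} (A : Matrix (Fin m) (Fin n) ℝ) (y : Fin n → ℝ) :
    Amul A y = ∑ j, y j • col A j := by
  ext i
  have : (∑ j, y j • col A j) i = ∑ j, y j * A i j := by
    rw [WithLp.ofLp_sum, Finset.sum_apply]
    apply Finset.sum_congr rfl
    intro j _
    rfl
  rw [this]
  simp [Amul, mul_comm]

set_option maxHeartbeats 1000000 in
private lemma key {m n : ℕ} (A : Matrix (Fin m) (Fin n) ℝ)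
    (F : Set (EuclideanSpace ℝ (Fin m)))
    (hF : IsExposed ℝ (convexHull ℝ (colSet A)) F)
    (z x : Fin n → ℝ) (hx : x ∈ stdSimplex ℝ (Fin n))
    (hzF : Amul A z ∈ F)
    (hg : Amul A x - Amul A z ≠ 0) :
    ∃ G : Set (EuclideanSpace ℝ (Fin m)), IsExposed ℝ F G ∧ G.Nonempty ∧
      G ≠ convexHull ℝ (colSet A) ∧
      ∀ p : EuclideanSpace ℝ (Fin m),
        ⟪p, (‖Amul A x - Amul A z‖)⁻¹ • (Amul A x - Amul A z)⟫ = 1 →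
        setDist G (convexHull ℝ (colSet A \ G)) ≤ maxGap A x p := by
  classical
  have colSet_eq : colSet A = ↑(Finset.univ.image (col A)) := by
    ext a
    simp [colSet, eq_comm]
  set C := convexHull ℝ (colSet A) with hCdef
  set g : EuclideanSpace ℝ (Fin m) := Amul A x - Amul A z with hgdef
  set d : EuclideanSpace ℝ (Fin m) := (‖g‖)⁻¹ • g with hddef
  have hgnorm : (0:ℝ) < ‖g‖ := norm_pos_iff.mpr hg
  have hdg : ⟪d, g⟫ = ‖g‖ := by
    rw [hddef, real_inner_smul_left, real_inner_self_eq_norm_mul_norm]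
    field_simp
  have hdnorm : ‖d‖ = 1 := norm_smul_inv_norm hg
  -- basic facts on C and F
  have hCconv : Convex ℝ C := convex_convexHull ℝ _
  have hCcompact : IsCompact C := by
    rw [hCdef, colSet_eq]
    exact (Finset.univ.image (col A)).finite_toSet.isCompact_convexHull ℝ
  have hFne : F.Nonempty := ⟨Amul A z, hzF⟩
  obtain ⟨lF, hlF⟩ := hF hFne
  have hFsub : F ⊆ C := by rw [hlF]; exact fun u hu => hu.1
  have hFconv : Convex ℝ F := hF.convex hCconv
  have hFclosed : IsClosed F := hF.isClosed hCcompact.isClosed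
  have hFcompact : IsCompact F := hCcompact.of_isClosed_subset hFclosed hFsub
  -- membership of columns in C
  have hcolC : ∀ j, col A j ∈ C := fun j =>
    subset_convexHull ℝ _ ⟨j, rfl⟩
  -- x-support hull
  set Sx : Finset (Fin n) := Finset.univ.filter (fun i => 0 < x i) with hSx
  set DX := convexHull ℝ ((Sx.image (col A) : Finset (EuclideanSpace ℝ (Fin m))) : Set (EuclideanSpace ℝ (Fin m))) with hDX
  have hAxrep : Amul A x = ∑ j, x j • col A j := amul_eq A x
  have hAx : Amul A x ∈ DX := by
    rw [hAxrep, hDX]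
    apply sum_mem_convexHull
    · exact fun j => hx.1 j
    · exact hx.2
    · intro j _ hj
      have hxj : 0 < x j := lt_of_le_of_ne (hx.1 j) (Ne.symm hj)
      exact Finset.mem_coe.mpr (Finset.mem_image.mpr ⟨j, by simp [hSx, hxj], rfl⟩)
  have hDXcompact : IsCompact DX := by
    rw [hDX]
    exact (Sx.image (col A)).finite_toSet.isCompact_convexHull ℝ
  have hDXsub : DX ⊆ C := by
    rw [hDX, hCdef]
    apply convexHull_mono
    intro a ha
    rcases Finset.mem_image.mp (Finset.mem_coe.mp ha) with ⟨j, _, rfl⟩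
    exact ⟨j, rfl⟩
  -- the optimization problem
  set P : Set (EuclideanSpace ℝ (Fin m) × EuclideanSpace ℝ (Fin m)) :=
    {q | (q.1 ∈ DX ∧ q.2 ∈ F) ∧ 0 ≤ ⟪d, q.1 - q.2⟫ ∧ q.1 - q.2 = ⟪d, q.1 - q.2⟫ • d}
      with hPdef
  have hPne : (Amul A x, Amul A z) ∈ P := by
    refine ⟨⟨hAx, hzF⟩, ?_, ?_⟩
    · show (0:ℝ) ≤ ⟪d, Amul A x - Amul A z⟫
      rw [← hgdef, hdg]
      exact hgnorm.le
    · show Amul A x - Amul A z = ⟪d, Amul A x - Amul A z⟫ • d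
      rw [← hgdef, hdg, hddef, smul_smul]
      rw [mul_inv_cancel₀ (ne_of_gt hgnorm), one_smul]
  have hcont : Continuous (fun q : EuclideanSpace ℝ (Fin m) × EuclideanSpace ℝ (Fin m)
      => ⟪d, q.1 - q.2⟫) :=
    Continuous.inner continuous_const (continuous_fst.sub continuous_snd)
  have hPclosed : IsClosed P := by
    apply IsClosed.inter
    · exact (hDXcompact.isClosed.preimage continuous_fst).inter
        (hFclosed.preimage continuous_snd)
    · apply IsClosed.inter
      · exact isClosed_le continuous_const hcont
      · exact isClosed_eq (continuous_fst.sub continuous_snd)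
          (hcont.smul continuous_const)
  have hPcompact : IsCompact P :=
    (hDXcompact.prod hFcompact).of_isClosed_subset hPclosed (fun q hq => ⟨hq.1.1, hq.1.2⟩)
  obtain ⟨q0, hq0P, hqmax⟩ := hPcompact.exists_isMaxOn ⟨_, hPne⟩ hcont.continuousOn
  set u0 := q0.1 with hu0def
  set w0 := q0.2 with hw0def
  set τ : ℝ := ⟪d, u0 - w0⟫ with hτdef
  have hu0DX : u0 ∈ DX := hq0P.1.1
  have hw0F : w0 ∈ F := hq0P.1.2
  have huw : u0 - w0 = τ • d := hq0P.2.2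
  have hτg : ‖g‖ ≤ τ := by
    have := hqmax hPne
    simp only [hτdef] at this ⊢
    calc ‖g‖ = ⟪d, Amul A x - Amul A z⟫ := by rw [← hgdef, hdg]
    _ ≤ _ := this
  have hτpos : 0 < τ := lt_of_lt_of_le hgnorm hτg
  -- the cone of feasible directions within F at w0
  set v : Fin n → EuclideanSpace ℝ (Fin m) :=
    fun j => if col A j ∈ F then col A j - w0 else 0 with hvdef
  have hKmem : ∀ y ∈ F, y - w0 ∈ coneOf v := by
    intro y hy
    have hyC : y ∈ C := hFsub hy
    rw [hCdef, colSet_eq] at hyC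
    obtain ⟨β, hβ0, hβsupp, hβ1, hβrep⟩ := rep_index (col A) Finset.univ hyC
    have hβF : ∀ j, β j ≠ 0 → col A j ∈ F := by
      intro j hj
      have := face_absorb lF Finset.univ β hβ0 hβ1 (col A) (fun i _ => hcolC i)
        (by rw [hβrep]; exact hlF ▸ hy) j (Finset.mem_univ j) hj
      rw [hlF]
      exact this
    refine ⟨β, hβ0, ?_⟩
    rw [eq_comm]
    calc ∑ j, β j • v j = ∑ j, (β j • col A j - β j • w0) := by
          apply Finset.sum_congr rfl
          intro j _
          by_cases hjF : col A j ∈ F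
          · rw [hvdef]
            simp only [if_pos hjF]
            rw [smul_sub]
          · have hβj : β j = 0 := by
              by_contra h
              exact hjF (hβF j h)
            rw [hvdef]
            simp [hβj, if_neg hjF]
      _ = y - w0 := by
          rw [Finset.sum_sub_distrib, hβrep, ← Finset.sum_smul, hβ1, one_smul]
  have hpush_of_mem : ∀ b : EuclideanSpace ℝ (Fin m), w0 - b ∈ coneOf v →
      ∃ t : ℝ, 0 < t ∧ w0 + t • (w0 - b) ∈ F := by
    rintro b ⟨c, hc0, hcrep⟩
    set c' : Fin n → ℝ := fun j => if col A j ∈ F then c j else 0 with hc'def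
    have hc'0 : ∀ j, 0 ≤ c' j := fun j => by
      rw [hc'def]
      dsimp only
      split
      exacts [hc0 j, le_refl 0]
    have hcrep' : w0 - b = ∑ j, c' j • (col A j - w0) := by
      rw [hcrep]
      apply Finset.sum_congr rfl
      intro j _
      by_cases hjF : col A j ∈ F
      · rw [hvdef, hc'def]
        simp only [if_pos hjF]
      · rw [hvdef, hc'def]
        simp [if_neg hjF]
    set sc : ℝ := ∑ j, c' j with hscdef
    have hsc0 : 0 ≤ sc := Finset.sum_nonneg fun j _ => hc'0 j
    rcases eq_or_lt_of_le hsc0 with hsc | hsc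
    · -- all coefficients zero, so b = w0
      have hall : ∀ j ∈ Finset.univ, c' j = 0 :=
        (Finset.sum_eq_zero_iff_of_nonneg (fun j _ => hc'0 j)).mp hsc.symm
      have hwb : w0 - b = 0 := by
        rw [hcrep']
        apply Finset.sum_eq_zero
        intro j hj
        rw [hall j hj, zero_smul]
      exact ⟨1, one_pos, by rw [hwb, smul_zero, add_zero]; exact hw0F⟩
    · set JF : Finset (Fin n) := Finset.univ.filter (fun j => col A j ∈ F) with hJF
      have hsumJF : ∑ j ∈ JF, c' j = sc := by
        rw [hscdef, hJF]
        apply Finset.sum_filter_of_ne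
        intro j _ hj
        by_contra hjF
        exact hj (by rw [hc'def]; simp [if_neg hjF])
      set u : EuclideanSpace ℝ (Fin m) := ∑ j ∈ JF, (c' j / sc) • col A j with hudef
      have huF : u ∈ F := by
        rw [hudef]
        apply hFconv.sum_mem
        · intro j _
          exact div_nonneg (hc'0 j) hsc0
        · rw [← Finset.sum_div, hsumJF, div_self (ne_of_gt hsc)]
        · intro j hj
          rw [hJF] at hj
          exact (Finset.mem_filter.mp hj).2
      have hkey : w0 - b = sc • (u - w0) := by
        have h1 : ∑ j, c' j • (col A j - w0) = ∑ j ∈ JF, c' j • (col A j - w0) := by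
          symm
          apply Finset.sum_filter_of_ne
          intro j _ hj
          by_contra hjF
          have : c' j = 0 := by rw [hc'def]; simp [if_neg hjF]
          exact hj (by rw [this, zero_smul])
        have h2 : sc • u = ∑ j ∈ JF, c' j • col A j := by
          rw [hudef, Finset.smul_sum]
          apply Finset.sum_congr rfl
          intro j _
          rw [smul_smul, mul_div_cancel₀ _ (ne_of_gt hsc)]
        rw [hcrep', h1]
        simp only [smul_sub]
        rw [Finset.sum_sub_distrib, h2, ← Finset.sum_smul, hsumJF]
      refine ⟨sc⁻¹, inv_pos.mpr hsc, ?_⟩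
      rw [hkey, smul_smul, inv_mul_cancel₀ (ne_of_gt hsc), one_smul]
      rw [add_sub_cancel]
      exact huF
  -- non-pushable column indices and separating functionals
  set NP : Finset (Fin n) := Finset.univ.filter
    (fun j => col A j ∈ F ∧ ¬∃ t : ℝ, 0 < t ∧ w0 + t • (w0 - col A j) ∈ F) with hNP
  have hsep : ∀ j ∈ NP, ∃ f : EuclideanSpace ℝ (Fin m) →L[ℝ] ℝ,
      (∀ y ∈ coneOf v, f y ≤ 0) ∧ 0 < f (w0 - col A j) := by
    intro j hj
    rw [hNP, Finset.mem_filter] at hj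
    apply coneOf_separation
    intro hmem
    exact hj.2.2 (hpush_of_mem _ hmem)
  set f : Fin n → (EuclideanSpace ℝ (Fin m) →L[ℝ] ℝ) :=
    fun j => if h : j ∈ NP then (hsep j h).choose else 0 with hfdef
  have hf1 : ∀ j ∈ NP, ∀ y ∈ coneOf v, f j y ≤ 0 := by
    intro j hj y hy
    rw [hfdef]
    dsimp only
    rw [dif_pos hj]
    exact (hsep j hj).choose_spec.1 y hy
  have hf2 : ∀ j ∈ NP, 0 < f j (w0 - col A j) := by
    intro j hj
    rw [hfdef]
    dsimp only
    rw [dif_pos hj]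
    exact (hsep j hj).choose_spec.2
  set l : EuclideanSpace ℝ (Fin m) →L[ℝ] ℝ := ∑ j ∈ NP, f j with hldef
  have hlval : ∀ y, l y = ∑ j ∈ NP, f j y := by
    intro y
    rw [hldef]
    exact ContinuousLinearMap.sum_apply _ _ _
  have hlmono : ∀ y ∈ F, l y ≤ l w0 := by
    intro y hy
    rw [hlval, hlval]
    apply Finset.sum_le_sum
    intro j hj
    have h := hf1 j hj _ (hKmem y hy)
    rw [map_sub] at h
    linarith
  set G : Set (EuclideanSpace ℝ (Fin m)) := {y | y ∈ F ∧ ∀ y' ∈ F, l y' ≤ l y} with hGdef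
  have hw0G : w0 ∈ G := ⟨hw0F, fun y' hy' => hlmono y' hy'⟩
  have hGexp : IsExposed ℝ F G := fun _ => ⟨l, rfl⟩
  have hGsubF : G ⊆ F := fun y hy => hy.1
  -- columns in G are pushable
  have hGpush : ∀ j : Fin n, col A j ∈ G →
      ∃ t : ℝ, 0 < t ∧ w0 + t • (w0 - col A j) ∈ F := by
    intro j hjG
    by_contra hnp
    have hjNP : j ∈ NP := by
      rw [hNP, Finset.mem_filter]
      exact ⟨Finset.mem_univ j, hjG.1, hnp⟩
    have h2 : ∀ j' ∈ NP, f j' (col A j) ≤ f j' w0 := by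
      intro j' hj'
      have h := hf1 j' hj' _ (hKmem _ hjG.1)
      rw [map_sub] at h
      linarith
    have hsum0 : ∑ j' ∈ NP, (f j' w0 - f j' (col A j)) = 0 := by
      have heq : ∑ j' ∈ NP, (f j' w0 - f j' (col A j)) = l w0 - l (col A j) := by
        rw [Finset.sum_sub_distrib, ← hlval, ← hlval]
      rw [heq]
      have h1 : l w0 ≤ l (col A j) := hjG.2 w0 hw0F
      have h3 : l (col A j) ≤ l w0 := hlmono _ hjG.1
      linarith
    have hterm0 := (Finset.sum_eq_zero_iff_of_nonneg
      (fun j' hj' => by linarith [h2 j' hj'])).mp hsum0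
    have hstrict := hf2 j hjNP
    rw [map_sub] at hstrict
    have := hterm0 j hjNP
    linarith
  have hdd1 : ⟪d, d⟫ = 1 := by
    rw [real_inner_self_eq_norm_mul_norm, hdnorm]
    norm_num
  -- representation of u0 over the support columns
  have hu0DX' : u0 ∈ convexHull ℝ ((Sx.image (col A) : Finset (EuclideanSpace ℝ (Fin m)))
      : Set (EuclideanSpace ℝ (Fin m))) := by
    rw [← hDX]
    exact hu0DX
  obtain ⟨α, hα0, hαsupp, hα1, hαrep⟩ := rep_index (col A) Sx hu0DX'
  -- no support column lies in G
  have hnotG : ∀ j, α j ≠ 0 → col A j ∉ G := by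
    intro j hαj hjG
    obtain ⟨t₁, ht₁pos, ht₁F⟩ := hGpush j hjG
    set a := col A j with hadef
    have hαjpos : 0 < α j := lt_of_le_of_ne (hα0 j) (Ne.symm hαj)
    set t₀ : ℝ := min t₁ (α j) with ht₀def
    have ht₀pos : 0 < t₀ := lt_min ht₁pos hαjpos
    have ht₀le₁ : t₀ ≤ t₁ := min_le_left _ _
    have ht₀leα : t₀ ≤ α j := min_le_right _ _
    have ht₁ne : t₁ ≠ 0 := ne_of_gt ht₁pos
    -- the pushed w stays in F
    have hw' : w0 + t₀ • (w0 - a) ∈ F := by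
      have hcomb := hFconv hw0F ht₁F (a := 1 - t₀/t₁) (b := t₀/t₁)
        (by rw [sub_nonneg]; exact div_le_one_of_le₀ ht₀le₁ ht₁pos.le)
        (by positivity) (by ring)
      have heq : (1 - t₀/t₁) • w0 + (t₀/t₁) • (w0 + t₁ • (w0 - a)) = w0 + t₀ • (w0 - a) := by
        match_scalars <;> (field_simp; try ring)
      rw [← heq]
      exact hcomb
    -- the pushed u stays in DX
    set β : Fin n → ℝ := fun k => (1 + t₀) * α k - (if k = j then t₀ else 0) with hβdef
    have hβ0 : ∀ k, 0 ≤ β k := by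
      intro k
      rw [hβdef]
      dsimp only
      by_cases hk : k = j
      · rw [if_pos hk, hk]
        nlinarith [mul_nonneg ht₀pos.le (hα0 j)]
      · rw [if_neg hk, sub_zero]
        exact mul_nonneg (by linarith) (hα0 k)
    have hβ1 : ∑ k, β k = 1 := by
      rw [hβdef]
      rw [Finset.sum_sub_distrib, ← Finset.mul_sum, hα1,
        Finset.sum_ite_eq' Finset.univ j (fun _ => t₀)]
      simp only [Finset.mem_univ, if_true]
      ring
    have hβrep : ∑ k, β k • col A k = u0 + t₀ • (u0 - a) := by
      rw [hβdef]
      simp only [sub_smul, ite_smul, zero_smul, mul_smul]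
      rw [Finset.sum_sub_distrib, ← Finset.smul_sum, hαrep,
        Finset.sum_ite_eq' Finset.univ j (fun k => t₀ • col A k)]
      simp only [Finset.mem_univ, if_true]
      rw [hadef]
      module
    have hu' : u0 + t₀ • (u0 - a) ∈ DX := by
      rw [← hβrep, hDX]
      apply sum_mem_convexHull _ _ _ hβ0 hβ1
      intro k _ hβk
      have hkSx : k ∈ Sx := by
        by_cases hk : k = j
        · subst hk
          by_contra hkSx
          exact hαj (hαsupp k hkSx)
        · have hαk : α k ≠ 0 := by
            intro h
            apply hβk
            rw [hβdef]
            dsimp only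
            rw [if_neg hk, h, sub_zero, mul_zero]
          by_contra hkSx
          exact hαk (hαsupp k hkSx)
      exact Finset.mem_coe.mpr (Finset.mem_image.mpr ⟨k, hkSx, rfl⟩)
    -- contradiction with maximality
    have hdiff : (u0 + t₀ • (u0 - a)) - (w0 + t₀ • (w0 - a)) = (1 + t₀) • (u0 - w0) := by
      module
    have hinner' : ⟪d, (u0 + t₀ • (u0 - a)) - (w0 + t₀ • (w0 - a))⟫ = (1 + t₀) * τ := by
      rw [hdiff, huw, smul_smul, real_inner_smul_right, hdd1, mul_one]
    have hmem' : (u0 + t₀ • (u0 - a), w0 + t₀ • (w0 - a)) ∈ P := by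
      refine ⟨⟨hu', hw'⟩, ?_, ?_⟩
      · show (0:ℝ) ≤ ⟪d, (u0 + t₀ • (u0 - a)) - (w0 + t₀ • (w0 - a))⟫
        rw [hinner']
        positivity
      · show (u0 + t₀ • (u0 - a)) - (w0 + t₀ • (w0 - a)) = _ • d
        rw [hinner', hdiff, huw, smul_smul]
    have hle := hqmax hmem'
    have hle' : (1 + t₀) * τ ≤ τ := by
      calc (1 + t₀) * τ = ⟪d, (u0 + t₀ • (u0 - a)) - (w0 + t₀ • (w0 - a))⟫ := hinner'.symm
      _ ≤ ⟪d, u0 - w0⟫ := hle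
      _ = τ := rfl
    nlinarith
  -- G is a proper subset of the hull
  obtain ⟨j₁, hj₁⟩ : ∃ j, α j ≠ 0 := by
    by_contra h
    push_neg at h
    rw [Finset.sum_eq_zero (fun j _ => h j)] at hα1
    exact zero_ne_one hα1
  have hGne : G ≠ C := by
    intro hGC
    exact hnotG j₁ hj₁ (by rw [hGC]; exact hcolC j₁)
  -- u0 lies in the hull of the complementary columns
  have hu0mem : u0 ∈ convexHull ℝ (colSet A \ G) := by
    rw [← hαrep]
    apply sum_mem_convexHull _ _ _ hα0 hα1 (s := colSet A \ G)
    intro k _ hk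
    exact ⟨⟨k, rfl⟩, hnotG k hk⟩
  -- distance bound
  have hsetdist : setDist G (convexHull ℝ (colSet A \ G)) ≤ τ := by
    have hbdd : BddBelow {r | ∃ c ∈ G, ∃ d' ∈ convexHull ℝ (colSet A \ G), r = dist c d'} := by
      refine ⟨0, ?_⟩
      rintro r ⟨c, _, d', _, rfl⟩
      exact dist_nonneg
    have hmem : dist w0 u0 ∈ {r | ∃ c ∈ G, ∃ d' ∈ convexHull ℝ (colSet A \ G), r = dist c d'} :=
      ⟨w0, hw0G, u0, hu0mem, rfl⟩
    have hdistval : dist w0 u0 = τ := by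
      rw [dist_eq_norm, ← norm_neg, neg_sub, huw, norm_smul, hdnorm, mul_one,
        Real.norm_eq_abs, abs_of_pos hτpos]
    calc setDist G (convexHull ℝ (colSet A \ G)) ≤ dist w0 u0 := csInf_le hbdd hmem
    _ = τ := hdistval
  refine ⟨G, hGexp, ⟨w0, hw0G⟩, hGne, ?_⟩
  intro p hp
  have hpd : ⟪p, d⟫ = 1 := by
    rw [hddef, hgdef]
    exact hp
  -- w0 representation over all columns
  have hw0C : w0 ∈ C := hFsub hw0F
  rw [hCdef, colSet_eq] at hw0C
  obtain ⟨γ, hγ0, _, hγ1, hγrep⟩ := rep_index (col A) Finset.univ hw0C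
  set M := maxGap A x p with hMdef
  have hbddT : BddAbove {t | ∃ i jj : Fin n, 0 < x i ∧ t = ⟪p, col A i - col A jj⟫} := by
    apply Set.Finite.bddAbove
    apply Set.Finite.subset
      (Set.finite_range (fun q : Fin n × Fin n => ⟪p, col A q.1 - col A q.2⟫))
    rintro t ⟨i, jj, _, rfl⟩
    exact ⟨(i, jj), rfl⟩
  have hpair : ∀ i jj : Fin n, 0 < x i → ⟪p, col A i - col A jj⟫ ≤ M :=
    fun i jj hi => le_csSup hbddT ⟨i, jj, hi, rfl⟩
  have hstep : ∀ i, α i ≠ 0 → (⟪p, col A i⟫ - ∑ jj, γ jj * ⟪p, col A jj⟫) ≤ M := by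
    intro i hi
    have hxi : 0 < x i := by
      have hiSx : i ∈ Sx := by
        by_contra hiSx
        exact hi (hαsupp i hiSx)
      rw [hSx] at hiSx
      exact (Finset.mem_filter.mp hiSx).2
    have hterm : ∀ jj, γ jj * (⟪p, col A i⟫ - ⟪p, col A jj⟫) ≤ γ jj * M := by
      intro jj
      apply mul_le_mul_of_nonneg_left _ (hγ0 jj)
      rw [← inner_sub_right]
      exact hpair i jj hxi
    calc ⟪p, col A i⟫ - ∑ jj, γ jj * ⟪p, col A jj⟫
        = ∑ jj, γ jj * (⟪p, col A i⟫ - ⟪p, col A jj⟫) := by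
          rw [Finset.sum_congr rfl (fun jj _ => mul_sub (γ jj) _ _), Finset.sum_sub_distrib,
            ← Finset.sum_mul, hγ1, one_mul]
      _ ≤ ∑ jj, γ jj * M := Finset.sum_le_sum (fun jj _ => hterm jj)
      _ = M := by rw [← Finset.sum_mul, hγ1, one_mul]
  have hτM : τ ≤ M := by
    have h1 : ⟪p, u0⟫ = ∑ i, α i * ⟪p, col A i⟫ := by
      rw [← hαrep, inner_sum]
      exact Finset.sum_congr rfl (fun i _ => real_inner_smul_right _ _ _)
    have h2 : ⟪p, w0⟫ = ∑ jj, γ jj * ⟪p, col A jj⟫ := by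
      rw [← hγrep, inner_sum]
      exact Finset.sum_congr rfl (fun i _ => real_inner_smul_right _ _ _)
    have h3 : τ = ⟪p, u0⟫ - ⟪p, w0⟫ := by
      rw [← inner_sub_right, huw, real_inner_smul_right, hpd, mul_one]
    rw [h3, h1, h2]
    set W := ∑ jj, γ jj * ⟪p, col A jj⟫ with hWdef
    calc ∑ i, α i * ⟪p, col A i⟫ - W = ∑ i, α i * (⟪p, col A i⟫ - W) := by
          rw [Finset.sum_congr rfl (fun i _ => mul_sub (α i) _ _), Finset.sum_sub_distrib,
            ← Finset.sum_mul, hα1, one_mul]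
      _ ≤ ∑ i, α i * M := by
          apply Finset.sum_le_sum
          intro i _
          by_cases hi : α i = 0
          · rw [hi]
            simp
          · exact mul_le_mul_of_nonneg_left (hstep i hi) (hα0 i)
      _ = M := by rw [← Finset.sum_mul, hα1, one_mul]
  exact le_trans hsetdist hτM

end Key

/-- Localized lower bound: if `F` is the smallest face of `conv(A)` containing
`AZ = {Az : z ∈ Z}`, then `Φ(A,Z) ≥ min over nonempty faces G of F with
G ≠ conv(A) of dist(G, conv(A \ G))`. -/
theorem phiLoc_lower_bound {m n : ℕ} (A : Matrix (Fin m) (Fin n) ℝ)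
    (hcols : ∃ j j' : Fin n, col A j ≠ col A j')
    (Z : Set (Fin n → ℝ)) (hZ : Z.Nonempty) (hZsub : Z ⊆ stdSimplex ℝ (Fin n))
    (F : Set (EuclideanSpace ℝ (Fin m)))
    (hF : IsExposed ℝ (convexHull ℝ (colSet A)) F)
    (hAZF : {u | ∃ z ∈ Z, u = Amul A z} ⊆ F)
    (hFmin : ∀ G : Set (EuclideanSpace ℝ (Fin m)),
      IsExposed ℝ (convexHull ℝ (colSet A)) G → {u | ∃ z ∈ Z, u = Amul A z} ⊆ G → F ⊆ G) :
    sInf {r | ∃ G : Set (EuclideanSpace ℝ (Fin m)), IsExposed ℝ F G ∧ G.Nonempty ∧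
        G ≠ convexHull ℝ (colSet A) ∧ r = setDist G (convexHull ℝ (colSet A \ G))} ≤
      phiLoc A Z := by
  classical
  set L := {r | ∃ G : Set (EuclideanSpace ℝ (Fin m)), IsExposed ℝ F G ∧ G.Nonempty ∧
      G ≠ convexHull ℝ (colSet A) ∧ r = setDist G (convexHull ℝ (colSet A \ G))} with hL
  have hLbdd : BddBelow L := by
    refine ⟨0, ?_⟩
    rintro r ⟨G, _, _, _, rfl⟩
    apply Real.sInf_nonneg
    rintro t ⟨c, _, d', _, rfl⟩
    exact dist_nonneg
  obtain ⟨z₀, hz₀⟩ := hZ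
  obtain ⟨j, j', hjj⟩ := hcols
  have hv : ∀ k : Fin n, (fun i => if i = k then (1:ℝ) else 0) ∈ stdSimplex ℝ (Fin n) := by
    intro k
    constructor
    · intro i
      dsimp only
      split
      · exact zero_le_one
      · exact le_refl 0
    · simp
  have hAv : ∀ k : Fin n, Amul A (fun i => if i = k then (1:ℝ) else 0) = col A k := by
    intro k
    rw [amul_eq]
    have hterm : ∀ i : Fin n, (if i = k then (1:ℝ) else 0) • col A i
        = if i = k then col A i else 0 := by
      intro i
      split <;> simp
    rw [Finset.sum_congr rfl (fun i _ => hterm i),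
      Finset.sum_ite_eq' Finset.univ k (fun i => col A i)]
    simp
  have hxex : ∃ x₀ ∈ stdSimplex ℝ (Fin n), Amul A x₀ - Amul A z₀ ≠ 0 := by
    by_contra h
    push_neg at h
    have h1 := h _ (hv j)
    have h2 := h _ (hv j')
    rw [sub_eq_zero] at h1 h2
    rw [hAv] at h1 h2
    exact hjj (h1.trans h2.symm)
  obtain ⟨x₀, hx₀, hg₀⟩ := hxex
  have hPne : {r | ∃ z ∈ Z, ∃ x ∈ stdSimplex ℝ (Fin n),
      Amul A x - Amul A z ≠ 0 ∧ r = phi A x z}.Nonempty :=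
    ⟨phi A x₀ z₀, z₀, hz₀, x₀, hx₀, hg₀, rfl⟩
  show sInf L ≤ phiLoc A Z
  rw [phiLoc]
  apply le_csInf hPne
  rintro b ⟨z, hzZ, x, hxS, hgz, rfl⟩
  have hzF : Amul A z ∈ F := hAZF ⟨z, hzZ, rfl⟩
  obtain ⟨G, hGexp, hGne, hGneq, hGbound⟩ := key A F hF z x hxS hzF hgz
  have h1 : sInf L ≤ setDist G (convexHull ℝ (colSet A \ G)) :=
    csInf_le hLbdd ⟨G, hGexp, hGne, hGneq, rfl⟩
  rw [phi]
  apply le_csInf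
  · refine ⟨maxGap A x ((‖Amul A x - Amul A z‖)⁻¹ • (Amul A x - Amul A z)),
      (‖Amul A x - Amul A z‖)⁻¹ • (Amul A x - Amul A z), ?_, rfl⟩
    have hgn : ‖Amul A x - Amul A z‖ ≠ 0 := norm_ne_zero_iff.mpr hgz
    rw [real_inner_self_eq_norm_mul_norm, norm_smul, Real.norm_eq_abs, abs_inv, abs_norm,
      inv_mul_cancel₀ hgn, one_mul]
  · rintro r ⟨p, hp, rfl⟩
    exact h1.trans (hGbound p hp)
end

section
/- Let f: C → R be a μ-strongly convex differentiable function on a convex set C ⊆ R^m, and let u* ∈ C be a minimizer of f over C with f* = f(u*). Then for every u ∈ C: ⟨∇f(u), u − u*⟩ ≥ ‖u − u*‖ · √(2μ(f(u) − f*)). -/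
open scoped RealInnerProductSpace

/-- Slope bound for strongly convex functions (Premise 1): if `f` is `μ`-strongly convex
on a convex set `C` with gradient `f'`, and `u*` minimizes `f` over `C`, then for all
`u ∈ C`: `⟨∇f(u), u - u*⟩ ≥ ‖u - u*‖ √(2μ(f(u) - f*))`. -/
theorem strong_convexity_slope_bound {m : ℕ} (C : Set (EuclideanSpace ℝ (Fin m)))
    (hC : Convex ℝ C) (f : EuclideanSpace ℝ (Fin m) → ℝ)
    (f' : EuclideanSpace ℝ (Fin m) → EuclideanSpace ℝ (Fin m)) (μ : ℝ) (hμ : 0 < μ)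
    (hsc : ∀ u ∈ C, ∀ v ∈ C, f v ≥ f u + ⟪f' u, v - u⟫ + μ / 2 * ‖v - u‖ ^ 2)
    (ustar : EuclideanSpace ℝ (Fin m)) (hustar : ustar ∈ C)
    (hmin : ∀ u ∈ C, f ustar ≤ f u) :
    ∀ u ∈ C, ⟪f' u, u - ustar⟫ ≥ ‖u - ustar‖ * Real.sqrt (2 * μ * (f u - f ustar)) := by
  intro u hu
  have hsc' := hsc u hu ustar hustar
  have ha : 0 ≤ f u - f ustar := sub_nonneg.mpr (hmin u hu)
  set a := f u - f ustar with hadef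
  set r := ‖u - ustar‖ with hrdef
  have hr : ‖ustar - u‖ = r := by rw [hrdef, norm_sub_rev]
  have hinner : ⟪f' u, ustar - u⟫ = -⟪f' u, u - ustar⟫ := by
    rw [← inner_neg_right]; congr 1; abel
  rw [hr, hinner] at hsc'
  -- hsc' : f ustar ≥ f u - ⟪f' u, u - ustar⟫ + μ/2 * r^2
  set s := Real.sqrt (2 * μ * a) with hsdef
  have hs2 : s ^ 2 = 2 * μ * a := Real.sq_sqrt (by positivity)
  have hrnn : 0 ≤ r := norm_nonneg _
  nlinarith [sq_nonneg (s - μ * r), sq_nonneg r, Real.sqrt_nonneg (2 * μ * a)]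
end

section
/- Let f(u) = (1/2)⟨u,Qu⟩ + ⟨b,u⟩ with Q symmetric PSD, let A ∈ R^{m×n}, let z ∈ Δ_{n−1} be such that u* = Az minimizes f over conv(A), and set g = Q^{1/2}Az. Then for every x ∈ Δ_{n−1} with u = Ax: ⟨∇f(u), u − u*⟩ = ‖Q^{1/2}A(x−z)‖² + ⟨g, Q^{1/2}A(x−z)⟩ + ⟨b, A(x−z)⟩, and moreover ⟨∇f(u), u − u*⟩ ≥ f(u) − f(u*); combining these, ⟨∇f(u), u − u*⟩ ≥ ‖Ā(x−z)‖_g · √(f(u) − f(u*)), where Ā = [Q^{1/2}A; bᵀA] ∈ R^{(m+1)×n} and ‖v̄‖_g := √(‖v‖² + |gᵀv + v_{m+1}|) for v̄ = (v, v_{m+1}) ∈ R^{m+1}, provided ⟨g, Q^{1/2}A(x−z)⟩ + ⟨b, A(x−z)⟩ ≥ 0. -/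
open Matrix
open scoped BigOperators

lemma sym_dot_aux {m : ℕ} (M : Matrix (Fin m) (Fin m) ℝ) (hs : M.IsHermitian)
    (u v : Fin m → ℝ) : u ⬝ᵥ M.mulVec v = M.mulVec u ⬝ᵥ v := by
  have ht : Mᵀ = M := by
    ext i j
    rw [Matrix.transpose_apply]; simpa using (hs.apply j i).symm
  rw [Matrix.dotProduct_mulVec, ← Matrix.mulVec_transpose, ht]

/-- Premise 1' for a convex quadratic `f(u) = ½⟨u,Qu⟩ + ⟨b,u⟩` minimized over
`conv(A)` at `u* = Az`, with `g = Q^{1/2}Az`: for `u = Ax`, `x ∈ Δ`,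
`⟨∇f(u), u-u*⟩ = ‖Q^{1/2}A(x-z)‖² + ⟨g, Q^{1/2}A(x-z)⟩ + ⟨b, A(x-z)⟩`,
`⟨∇f(u), u-u*⟩ ≥ f(u) - f(u*)`, and hence (assuming the linear part is nonnegative)
`⟨∇f(u), u-u*⟩ ≥ ‖Ā(x-z)‖_g √(f(u) - f(u*))` where
`‖v̄‖_g = √(‖v‖² + |gᵀv + v_{m+1}|)` and `Ā = [Q^{1/2}A; bᵀA]`. -/
theorem quadratic_premise_one {m n : ℕ}
    (Q : Matrix (Fin m) (Fin m) ℝ) (hQ : Q.PosSemidef)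
    (R : Matrix (Fin m) (Fin m) ℝ) (hR : R.PosSemidef) (hRQ : R * R = Q)
    (b : Fin m → ℝ) (A : Matrix (Fin m) (Fin n) ℝ)
    (f : (Fin m → ℝ) → ℝ)
    (hf : f = fun u => 1 / 2 * (u ⬝ᵥ Q.mulVec u) + b ⬝ᵥ u)
    (z : Fin n → ℝ) (hz : z ∈ stdSimplex ℝ (Fin n))
    (hmin : ∀ x ∈ stdSimplex ℝ (Fin n), f (A.mulVec z) ≤ f (A.mulVec x))
    (g : Fin m → ℝ) (hg : g = R.mulVec (A.mulVec z))
    (x : Fin n → ℝ) (hx : x ∈ stdSimplex ℝ (Fin n))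
    -- abbreviations: `u = Ax`, `u* = Az`, `w = A(x-z)`
    (u ustar : Fin m → ℝ) (hu : u = A.mulVec x) (hustar : ustar = A.mulVec z)
    (w : Fin m → ℝ) (hw : w = u - ustar)
    (hnn : 0 ≤ g ⬝ᵥ R.mulVec w + b ⬝ᵥ w) :
    (Q.mulVec u + b) ⬝ᵥ (u - ustar) =
        R.mulVec w ⬝ᵥ R.mulVec w + g ⬝ᵥ R.mulVec w + b ⬝ᵥ w ∧
    (Q.mulVec u + b) ⬝ᵥ (u - ustar) ≥ f u - f ustar ∧
    (Q.mulVec u + b) ⬝ᵥ (u - ustar) ≥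
      Real.sqrt (R.mulVec w ⬝ᵥ R.mulVec w + |g ⬝ᵥ R.mulVec w + b ⬝ᵥ w|) *
        Real.sqrt (f u - f ustar) := by
  have hgR : g = R.mulVec ustar := by rw [hg, hustar]
  have huw : u = ustar + w := by rw [hw]; abel
  -- Part 1
  have hQmul : ∀ v, Q.mulVec v = R.mulVec (R.mulVec v) := by
    intro v; rw [Matrix.mulVec_mulVec, hRQ]
  have h1 : (Q.mulVec u + b) ⬝ᵥ (u - ustar) =
      R.mulVec w ⬝ᵥ R.mulVec w + g ⬝ᵥ R.mulVec w + b ⬝ᵥ w := by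
    rw [← hw, add_dotProduct]
    have : Q.mulVec u ⬝ᵥ w = R.mulVec u ⬝ᵥ R.mulVec w := by
      rw [hQmul, ← sym_dot_aux R hR.1, sym_dot_aux R hR.1]
    rw [this, huw, Matrix.mulVec_add, add_dotProduct, ← hgR]
    ring
  -- Part 2
  have hsymQ : ∀ a c, a ⬝ᵥ Q.mulVec c = c ⬝ᵥ Q.mulVec a := by
    intro a c
    rw [sym_dot_aux Q hQ.1, dotProduct_comm]
  have hpsd : 0 ≤ w ⬝ᵥ Q.mulVec w := by
    have := hQ.dotProduct_mulVec_nonneg w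
    simpa using this
  have h2 : (Q.mulVec u + b) ⬝ᵥ (u - ustar) ≥ f u - f ustar := by
    have hexp : w ⬝ᵥ Q.mulVec w =
        u ⬝ᵥ Q.mulVec u - 2 * (u ⬝ᵥ Q.mulVec ustar) + ustar ⬝ᵥ Q.mulVec ustar := by
      rw [hw, sub_dotProduct, Matrix.mulVec_sub, dotProduct_sub,
        dotProduct_sub, hsymQ ustar u]
      ring
    have hS : (Q.mulVec u + b) ⬝ᵥ (u - ustar) =
        u ⬝ᵥ Q.mulVec u - u ⬝ᵥ Q.mulVec ustar + b ⬝ᵥ u - b ⬝ᵥ ustar := by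
      simp only [add_dotProduct, dotProduct_sub]
      rw [← sym_dot_aux Q hQ.1 u u, ← sym_dot_aux Q hQ.1 u ustar]
      ring
    rw [hf]
    simp only
    rw [hS]
    nlinarith [hpsd, hexp]
  refine ⟨h1, h2, ?_⟩
  -- Part 3
  have hSnn : 0 ≤ (Q.mulVec u + b) ⬝ᵥ (u - ustar) := by
    rw [h1]
    have hRR : 0 ≤ R.mulVec w ⬝ᵥ R.mulVec w := by
      simp only [dotProduct]
      exact Finset.sum_nonneg fun i _ => mul_self_nonneg _
    linarith
  have habs : |g ⬝ᵥ R.mulVec w + b ⬝ᵥ w| = g ⬝ᵥ R.mulVec w + b ⬝ᵥ w := abs_of_nonneg hnn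
  have hin : R.mulVec w ⬝ᵥ R.mulVec w + |g ⬝ᵥ R.mulVec w + b ⬝ᵥ w| =
      (Q.mulVec u + b) ⬝ᵥ (u - ustar) := by rw [habs, h1]; ring
  rw [hin]
  calc Real.sqrt ((Q.mulVec u + b) ⬝ᵥ (u - ustar)) * Real.sqrt (f u - f ustar)
      ≤ Real.sqrt ((Q.mulVec u + b) ⬝ᵥ (u - ustar)) *
        Real.sqrt ((Q.mulVec u + b) ⬝ᵥ (u - ustar)) := by
        exact mul_le_mul_of_nonneg_left (Real.sqrt_le_sqrt h2) (Real.sqrt_nonneg _)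
    _ = (Q.mulVec u + b) ⬝ᵥ (u - ustar) := Real.mul_self_sqrt hSnn
end

section
/- Let Ā ∈ R^{(m+1)×n}, g ∈ R^m, and δ(g) := max over x,z ∈ Δ_{n−1} of ⟨(g,1), Ā(x−z)⟩. Suppose δ(g) > 0 and set = D·Ā where D is the (m+1)×(m+1) matrix equal to the identity in the first m rows and with last row (gᵀ/√δ(g), 1/√δ(g)). Then for any x ∈ Δ_{n−1} and z ∈ Z(g) := argmin_{z∈Δ}⟨(g,1), Āz⟩ with Ā(x−z) ≠ 0, one has ‖Â(x−z)‖ ≤ ‖Ā(x−z)‖_g, where ‖v̄‖_g := √(‖(v_1,...,v_m)‖² + |gᵀ(v_1,...,v_m) + v_{m+1}|). -/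
open Matrix
open scoped BigOperators

/-- Norm comparison in Proposition 5.1(b): with `δ(g) = max_{x,z∈Δ} ⟨(g,1), Ā(x-z)⟩ > 0`
and `Â = D Ā` where `D` is the identity in its first `m` rows and has last row
`(gᵀ/√δ, 1/√δ)`, for any `x ∈ Δ` and `z ∈ Z(g)` with `Ā(x-z) ≠ 0` one has
`‖Â(x-z)‖ ≤ ‖Ā(x-z)‖_g`, where `‖v̄‖_g = √(‖(v_1,…,v_m)‖² + |gᵀ(v_1,…,v_m) + v_{m+1}|)`. -/
theorem scaled_norm_comparison {m n : ℕ}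
    (Abar : Matrix (Fin (m + 1)) (Fin n) ℝ) (g : Fin m → ℝ)
    (gone : Fin (m + 1) → ℝ) (hgone : gone = Fin.snoc g (1 : ℝ))
    (δ : ℝ)
    (hδdef : δ = sSup {r | ∃ x ∈ stdSimplex ℝ (Fin n), ∃ z ∈ stdSimplex ℝ (Fin n),
      r = gone ⬝ᵥ Abar.mulVec (x - z)})
    (hδpos : 0 < δ)
    (D : Matrix (Fin (m + 1)) (Fin (m + 1)) ℝ)
    (hD : D = Matrix.of fun (i j : Fin (m + 1)) => if hi : (i : ℕ) < m then (if i = j then (1 : ℝ) else 0)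
      else if hj : (j : ℕ) < m then g ⟨j, hj⟩ / Real.sqrt δ else 1 / Real.sqrt δ)
    (Ahat : Matrix (Fin (m + 1)) (Fin n) ℝ) (hAhat : Ahat = D * Abar)
    (x z : Fin n → ℝ) (hx : x ∈ stdSimplex ℝ (Fin n)) (hz : z ∈ stdSimplex ℝ (Fin n))
    (hzZ : ∀ z' ∈ stdSimplex ℝ (Fin n),
      gone ⬝ᵥ Abar.mulVec z ≤ gone ⬝ᵥ Abar.mulVec z')
    (hne : Abar.mulVec (x - z) ≠ 0)
    (w : Fin (m + 1) → ℝ) (hw : w = Abar.mulVec (x - z)) :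
    Real.sqrt (Ahat.mulVec (x - z) ⬝ᵥ Ahat.mulVec (x - z)) ≤
      Real.sqrt ((fun i : Fin m => w i.castSucc) ⬝ᵥ (fun i : Fin m => w i.castSucc) +
        |g ⬝ᵥ (fun i : Fin m => w i.castSucc) + w (Fin.last m)|) := by
  have hspos : 0 < Real.sqrt δ := Real.sqrt_pos.mpr hδpos
  set s := Real.sqrt δ with hs
  set t : ℝ := g ⬝ᵥ (fun i : Fin m => w i.castSucc) + w (Fin.last m) with ht
  -- t = gone ⬝ᵥ w
  have htg : gone ⬝ᵥ w = t := by
    simp [ht, hgone, dotProduct, Fin.sum_univ_castSucc]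
  -- t ≥ 0
  have ht0 : 0 ≤ t := by
    have h := hzZ x hx
    rw [← htg, hw, Matrix.mulVec_sub, dotProduct_sub]
    linarith
  -- t ≤ δ
  have htδ : t ≤ δ := by
    have hSeq : {r | ∃ x ∈ stdSimplex ℝ (Fin n), ∃ z ∈ stdSimplex ℝ (Fin n),
        r = gone ⬝ᵥ Abar.mulVec (x - z)} =
        (fun p : (Fin n → ℝ) × (Fin n → ℝ) => gone ⬝ᵥ Abar.mulVec (p.1 - p.2)) ''
          (stdSimplex ℝ (Fin n) ×ˢ stdSimplex ℝ (Fin n)) := by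
      ext r
      constructor
      · rintro ⟨a, ha, b, hb, rfl⟩; exact ⟨(a, b), ⟨ha, hb⟩, rfl⟩
      · rintro ⟨⟨a, b⟩, ⟨ha, hb⟩, rfl⟩; exact ⟨a, ha, b, hb, rfl⟩
    have hcont : Continuous (fun p : (Fin n → ℝ) × (Fin n → ℝ) =>
        gone ⬝ᵥ Abar.mulVec (p.1 - p.2)) := by
      simp only [dotProduct, Matrix.mulVec, Pi.sub_apply]
      apply continuous_finset_sum
      intro i _
      apply Continuous.mul continuous_const
      apply continuous_finset_sum
      intro j _
      exact Continuous.mul continuous_const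
        (((continuous_apply j).comp continuous_fst).sub
          ((continuous_apply j).comp continuous_snd))
    have hbdd : BddAbove {r | ∃ x ∈ stdSimplex ℝ (Fin n), ∃ z ∈ stdSimplex ℝ (Fin n),
        r = gone ⬝ᵥ Abar.mulVec (x - z)} := by
      rw [hSeq]
      exact (((isCompact_stdSimplex ℝ (Fin n)).prod (isCompact_stdSimplex ℝ (Fin n))).image hcont).bddAbove
    have hmem : t ∈ {r | ∃ x ∈ stdSimplex ℝ (Fin n), ∃ z ∈ stdSimplex ℝ (Fin n),
        r = gone ⬝ᵥ Abar.mulVec (x - z)} := ⟨x, hx, z, hz, by rw [← hw, htg]⟩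
    rw [hδdef]
    exact le_csSup hbdd hmem
  -- compute Ahat.mulVec (x - z) = D.mulVec w
  have hAv : Ahat.mulVec (x - z) = D.mulVec w := by
    rw [hAhat, ← Matrix.mulVec_mulVec, ← hw]
  have hDcast : ∀ k : Fin m, D.mulVec w k.castSucc = w k.castSucc := by
    intro k
    have hk : ((k.castSucc : Fin (m+1)) : ℕ) < m := by simp [k.isLt]
    simp [hD, Matrix.mulVec, dotProduct, Matrix.of_apply, hk, ite_mul,
      Finset.sum_ite_eq]
  have hDlast : D.mulVec w (Fin.last m) = t / s := by
    have hm : ¬ ((Fin.last m : Fin (m+1)) : ℕ) < m := by simp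
    rw [hD]
    simp only [Matrix.mulVec, dotProduct, Matrix.of_apply, dif_neg hm]
    rw [Fin.sum_univ_castSucc]
    have h1 : ∀ k : Fin m,
        (if hj : ((k.castSucc : Fin (m+1)) : ℕ) < m then g ⟨(k.castSucc : Fin (m+1)), hj⟩ / s
          else 1 / s) * w k.castSucc = g k * w k.castSucc / s := by
      intro k
      have hk : ((k.castSucc : Fin (m+1)) : ℕ) < m := by simp [k.isLt]
      rw [dif_pos hk]
      have he : (⟨((k.castSucc : Fin (m+1)) : ℕ), hk⟩ : Fin m) = k := by
        apply Fin.ext; simp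
      rw [he]; ring
    rw [Finset.sum_congr rfl (fun k _ => h1 k), ← Finset.sum_div, one_div, ht]
    rw [dotProduct, dif_neg hm]
    ring
  -- main computation
  have hdot : Ahat.mulVec (x - z) ⬝ᵥ Ahat.mulVec (x - z) =
      (fun i : Fin m => w i.castSucc) ⬝ᵥ (fun i : Fin m => w i.castSucc) + t ^ 2 / δ := by
    rw [hAv, dotProduct, Fin.sum_univ_castSucc]
    simp only [hDcast, hDlast]
    rw [dotProduct]
    have hss : s * s = δ := Real.mul_self_sqrt hδpos.le
    have : t / s * (t / s) = t ^ 2 / δ := by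
      rw [div_mul_div_comm, hss]; ring
    rw [this]
  apply Real.sqrt_le_sqrt
  rw [hdot, abs_of_nonneg ht0]
  have : t ^ 2 / δ ≤ t := by
    rw [div_le_iff₀ hδpos]
    nlinarith
  linarith
end
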